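/- A half-full tree with l leaves is a complete binary tree if and only if l is a power of 2. -/

import Mathlib

inductive BTree : Type
  | leaf : BTree
  | node : BTree → BTree → BTree
deriving DecidableEq

namespace BTree

/-- Number of leaves of a binary tree. -/
def leaves : BTree → ℕ
  | leaf => 1
  | node l r => leaves l + leaves r

/-- Depth (height) of a binary tree. -/
def depth : BTree → ℕ
  | leaf => 0
  | node l r => max (depth l) (depth r) + 1

/-- Number of internal (non-leaf) nodes. -/
def internals : BTree → ℕ
  | leaf => 0
  | node l r => internals l + internals r + 1

/-- A complete binary tree: full, with all leaves at the same depth. -/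
def IsComplete : BTree → Prop
  | leaf => True
  | node l r => IsComplete l ∧ IsComplete r ∧ depth l = depth r

/-- A half-full tree (haft): every non-leaf node has two children, and its
left child is the root of a complete subtree containing at least half of the
node's leaf-descendants. -/
def IsHaft : BTree → Prop
  | leaf => True
  | node l r => IsComplete l ∧ leaves r ≤ leaves l ∧ IsHaft r

end BTree

/-!
A complete tree of depth `d` has `2 ^ d` leaves. Conversely, at the root of a haft the left
subtree is complete with `2 ^ d` leaves and the right one has between `1` and `2 ^ d` leaves;
the only power of two in `(2 ^ d, 2 ^ (d + 1)]` is `2 ^ (d + 1)`, so the right subtree is again a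
haft with `2 ^ d` leaves, complete of depth `d` by induction.
-/

theorem Nat.eq_two_pow_of_two_pow_add_eq_two_pow {b d k : ℕ} (hb : 0 < b) (hbd : b ≤ 2 ^ d)
    (h : 2 ^ d + b = 2 ^ k) : b = 2 ^ d := by
  have hdk : d < k := (Nat.pow_lt_pow_iff_right one_lt_two).mp (by omega : 2 ^ d < 2 ^ k)
  have hkd : k ≤ d + 1 :=
    (Nat.pow_le_pow_iff_right one_lt_two).mp (by rw [pow_succ]; omega : 2 ^ k ≤ 2 ^ (d + 1))
  obtain rfl : k = d + 1 := by omega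
  rw [pow_succ] at h
  omega

namespace BTree

theorem leaves_pos (t : BTree) : 0 < t.leaves := by
  induction t with
  | leaf => exact Nat.one_pos
  | node l r _ ihr => exact Nat.add_pos_right _ ihr

theorem IsComplete.leaves_eq_two_pow_depth {t : BTree} (ht : t.IsComplete) :
    t.leaves = 2 ^ t.depth := by
  induction t with
  | leaf => rfl
  | node l r ihl ihr =>
    obtain ⟨hl, hr, hd⟩ := ht
    rw [leaves, depth, ihl hl, ihr hr, hd, max_self, pow_succ, mul_two]

theorem IsComplete.depth_eq_of_leaves_eq_two_pow {t : BTree} (ht : t.IsComplete) {d : ℕ}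
    (h : t.leaves = 2 ^ d) : t.depth = d :=
  Nat.pow_right_injective le_rfl (ht.leaves_eq_two_pow_depth.symm.trans h)

theorem IsHaft.isComplete_of_leaves_eq_two_pow {t : BTree} (ht : t.IsHaft) {k : ℕ}
    (hk : t.leaves = 2 ^ k) : t.IsComplete := by
  induction t generalizing k with
  | leaf => trivial
  | node l r _ ihr =>
    obtain ⟨hl, hrl, hr⟩ := ht
    have hl_leaves := hl.leaves_eq_two_pow_depth
    rw [leaves, hl_leaves] at hk
    rw [hl_leaves] at hrl
    have hr_leaves : r.leaves = 2 ^ l.depth :=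
      Nat.eq_two_pow_of_two_pow_add_eq_two_pow r.leaves_pos hrl hk
    have hr_complete := ihr hr hr_leaves
    exact ⟨hl, hr_complete, (hr_complete.depth_eq_of_leaves_eq_two_pow hr_leaves).symm⟩

end BTree

/-- A haft with `l` leaves is a complete binary tree iff `l` is a power of 2. -/
theorem haft_complete_iff_pow_two (t : BTree) (ht : t.IsHaft) :
    t.IsComplete ↔ ∃ k : ℕ, t.leaves = 2 ^ k :=
  ⟨fun h => ⟨t.depth, h.leaves_eq_two_pow_depth⟩,
    fun ⟨_, hk⟩ => ht.isComplete_of_leaves_eq_two_pow hk⟩
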